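/- Let (X,ρ) and (X',ρ') be separable metric spaces, q ∈ ℝ, μ a Borel probability measure on X, ν a Borel probability measure on X', and ξ, ξ' premeasures on X and X' respectively. Then for any E ⊆ X and E' ⊆ X', with the convention ∞·0 = 0·∞ = 0, the inequality W^{q,ξ₀}_{μ×ν}(E×E') ≥ W^{q,ξ}_μ(E) · W^{q,ξ'}_ν(E') holds (no covering hypothesis on X or X' is required). -/

import Mathlib

open Metric MeasureTheory Set Filter TopologicalSpace
open scoped ENNReal NNReal Classical

noncomputable section

/-- `x ^ q` for extended nonnegative reals, with the paper's convention
`0 ^ q = ∞` for `q ≤ 0`. -/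
def epow (x : ℝ≥0∞) (q : ℝ) : ℝ≥0∞ := if x = 0 ∧ q ≤ 0 then ∞ else x ^ q

variable {X X' : Type*}

section Defs

variable [MetricSpace X] [MetricSpace X']

/-- A premeasure on a metric space: an increasing `[0,∞]`-valued function on the family of
closed balls, vanishing on the empty set. -/
def IsPremeasure (ξ : Set X → ℝ≥0∞) : Prop :=
  ξ ∅ = 0 ∧ ∀ (x : X) (r : ℝ) (x' : X) (r' : ℝ),
    closedBall x r ⊆ closedBall x' r' → ξ (closedBall x r) ≤ ξ (closedBall x' r')

/-- The doubling ("blanketed") condition defining the class `Φ_D` of premeasures: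
`ξ(B(x,2r)) ≤ K ξ(B(x,r))` for some constant `K > 1`, all `x` and all `0 < r ≤ 1`. -/
def PremeasureBlanketed (ξ : Set X → ℝ≥0∞) : Prop :=
  ∃ K : ℝ≥0, 1 < K ∧ ∀ (x : X) (r : ℝ), 0 < r → r ≤ 1 →
    ξ (closedBall x (2 * r)) ≤ (K : ℝ≥0∞) * ξ (closedBall x r)

variable [MeasurableSpace X] [MeasurableSpace X']

/-- The support of a Borel measure on a metric space. -/
def measSupport (μ : Measure X) : Set X := {x : X | ∀ r : ℝ, 0 < r → 0 < μ (ball x r)}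

/-- A blanketed (doubling) measure: for some `a > 1`,
`limsup_{r → 0⁺} sup_{x ∈ supp μ} μ(B(x,ar)) / μ(B(x,r)) < ∞`. -/
def MeasureBlanketed (μ : Measure X) : Prop :=
  ∃ a : ℝ, 1 < a ∧
    limsup (fun r : ℝ => ⨆ x ∈ measSupport μ,
      μ (closedBall x (a * r)) / μ (closedBall x r)) (nhdsWithin 0 (Ioi 0)) < ∞

/-- The quantity `μ(B)^q ξ(B)` attached to a ball `B`. -/
def ballWeight (μ : Measure X) (q : ℝ) (ξ : Set X → ℝ≥0∞) (B : Set X) : ℝ≥0∞ :=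
  epow (μ B) q * ξ B

/-- A centered `δ`-cover of `E`: countably many closed balls centered in `E`, of diameters
at most `2δ`, covering `E`. -/
def IsCenteredCover (E : Set X) (δ : ℝ) (c : ℕ → X) (r : ℕ → ℝ) : Prop :=
  (∀ i, c i ∈ E) ∧ (∀ i, diam (closedBall (c i) (r i)) ≤ 2 * δ) ∧
    E ⊆ ⋃ i, closedBall (c i) (r i)

/-- The pre-Hausdorff quantity `H^{q,ξ}_{μ,δ}(E)`. -/
def Hd (μ : Measure X) (q : ℝ) (ξ : Set X → ℝ≥0∞) (δ : ℝ) (E : Set X) : ℝ≥0∞ :=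
  if E = ∅ then 0 else
    ⨅ (c : ℕ → X) (r : ℕ → ℝ) (_ : IsCenteredCover E δ c r),
      ∑' i, ballWeight μ q ξ (closedBall (c i) (r i))

/-- `H^{q,ξ}_{μ,0}(E) = sup_{δ > 0} H^{q,ξ}_{μ,δ}(E)`. -/
def H0 (μ : Measure X) (q : ℝ) (ξ : Set X → ℝ≥0∞) (E : Set X) : ℝ≥0∞ :=
  ⨆ (δ : ℝ) (_ : 0 < δ), Hd μ q ξ δ E

/-- The generalized Hausdorff measure `H^{q,ξ}_μ(E) = sup_{F ⊆ E} H^{q,ξ}_{μ,0}(F)`. -/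
def HM (μ : Measure X) (q : ℝ) (ξ : Set X → ℝ≥0∞) (E : Set X) : ℝ≥0∞ :=
  ⨆ (F : Set X) (_ : F ⊆ E), H0 μ q ξ F

/-- A weighted and centered `δ`-cover of `E`: countably many pairs `(w i, B i)` of nonnegative
weights and closed balls centered in `E` of diameters at most `2δ`, with
`Σ {w i : x ∈ B i} ≥ 1` for every `x ∈ E`. -/
def IsWeightedCover (E : Set X) (δ : ℝ) (w : ℕ → ℝ≥0) (c : ℕ → X) (r : ℕ → ℝ) : Prop :=
  (∀ i, c i ∈ E) ∧ (∀ i, diam (closedBall (c i) (r i)) ≤ 2 * δ) ∧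
    ∀ x ∈ E, 1 ≤ ∑' i, (if x ∈ closedBall (c i) (r i) then (w i : ℝ≥0∞) else 0)

/-- The pre-weighted-Hausdorff quantity `W^{q,ξ}_{μ,δ}(E)`. -/
def Wd (μ : Measure X) (q : ℝ) (ξ : Set X → ℝ≥0∞) (δ : ℝ) (E : Set X) : ℝ≥0∞ :=
  if E = ∅ then 0 else
    ⨅ (w : ℕ → ℝ≥0) (c : ℕ → X) (r : ℕ → ℝ) (_ : IsWeightedCover E δ w c r),
      ∑' i, (w i : ℝ≥0∞) * ballWeight μ q ξ (closedBall (c i) (r i))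

/-- `W^{q,ξ}_{μ,0}(E) = sup_{δ > 0} W^{q,ξ}_{μ,δ}(E)`. -/
def W0 (μ : Measure X) (q : ℝ) (ξ : Set X → ℝ≥0∞) (E : Set X) : ℝ≥0∞ :=
  ⨆ (δ : ℝ) (_ : 0 < δ), Wd μ q ξ δ E

/-- The weighted generalized Hausdorff measure `W^{q,ξ}_μ(E) = sup_{F ⊆ E} W^{q,ξ}_{μ,0}(F)`. -/
def WM (μ : Measure X) (q : ℝ) (ξ : Set X → ℝ≥0∞) (E : Set X) : ℝ≥0∞ :=
  ⨆ (F : Set X) (_ : F ⊆ E), W0 μ q ξ F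

/-- Hypothesis (H) for `(X, ξ, μ)`: for every `ε > 0`, `X` can be covered by countably many
closed balls of diameters `< ε` on which `μ(B)^q ξ(B)` is finite. -/
def HypH (μ : Measure X) (q : ℝ) (ξ : Set X → ℝ≥0∞) : Prop :=
  ∀ ε : ℝ, 0 < ε → ∃ (c : ℕ → X) (r : ℕ → ℝ),
    (univ : Set X) ⊆ (⋃ i, closedBall (c i) (r i)) ∧
    (∀ i, diam (closedBall (c i) (r i)) < ε) ∧
    ∀ i, ballWeight μ q ξ (closedBall (c i) (r i)) < ∞

/-- The product premeasure `ξ₀(B × B') = ξ(B) ξ'(B')` on the product space (whose closed balls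
are exactly the products `B(x,r) × B(x',r)`), with the convention `0 ⬝ ∞ = ∞ ⬝ 0 = 0`. -/
def prodPre (ξ : Set X → ℝ≥0∞) (ξ' : Set X' → ℝ≥0∞) : Set (X × X') → ℝ≥0∞ :=
  fun S => ξ (Prod.fst '' S) * ξ' (Prod.snd '' S)

/-- Two sets are (positively) separated: `inf {ρ(x,y) : x ∈ E, y ∈ F} > 0`. -/
def SepSets (E F : Set X) : Prop := 0 < ⨅ x ∈ E, ⨅ y ∈ F, edist x y

/-- The upper `(q,ξ)`-density of `ν` at `x` with respect to `μ`:
`limsup_{r → 0⁺} ν(B(x,r)) / (μ(B(x,r))^q ξ(B(x,r)))`. -/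
def upperDensity (μ : Measure X) (q : ℝ) (ξ : Set X → ℝ≥0∞) (x : X) (ν : Measure X) : ℝ≥0∞ :=
  limsup (fun r : ℝ => ν (closedBall x r) / ballWeight μ q ξ (closedBall x r))
    (nhdsWithin 0 (Ioi 0))

/-- A Hausdorff function: right continuous, monotone increasing `h : [0,∞] → [0,∞]` with
`h(0) = 0` and `h(r) > 0` for `r > 0`. -/
def IsHausdorffFunction (h : ℝ≥0∞ → ℝ≥0∞) : Prop :=
  Monotone h ∧ h 0 = 0 ∧ (∀ r : ℝ≥0∞, 0 < r → 0 < h r) ∧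
    ∀ r : ℝ≥0∞, ContinuousWithinAt h (Ici r) r

/-- The premeasure `ξ_h` induced by a Hausdorff function: `ξ_h(B) = h(diam B)` for `B ≠ ∅`,
`ξ_h(∅) = 0`. -/
def hausPre (h : ℝ≥0∞ → ℝ≥0∞) : Set X → ℝ≥0∞ :=
  fun B => if B = ∅ then 0 else h (EMetric.diam B)

end Defs

/-!
Slicing a weighted `δ`-cover `(wᵢ, Bᵢ × B'ᵢ)` of `F × F'` at a point `x ∈ F` leaves the weighted
`δ`-cover `(wᵢ 𝟙[x ∈ Bᵢ], B'ᵢ)` of `F'`, so `∑_{x ∈ Bᵢ} wᵢ ν(B'ᵢ)^q ξ'(B'ᵢ) ≥ W_δ(F') > t`.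
Hence the weights `wᵢ ν(B'ᵢ)^q ξ'(B'ᵢ) / t`, truncated at `1`, form a weighted `δ`-cover of `F`,
and `t W_δ(F) ≤ ∑ wᵢ μ(Bᵢ)^q ξ(Bᵢ) ν(B'ᵢ)^q ξ'(B'ᵢ)`, which is the cost of the product cover
because both `μ × ν` and `ξ₀` split over product balls. Passing to suprema over `δ` and over
subsets gives the theorem.
-/

lemma ENNReal.min_tsum_le_tsum_min_one {ι : Type*} (a : ι → ℝ≥0∞) :
    min (∑' i, a i) 1 ≤ ∑' i, min (a i) 1 := by
  by_cases h : ∃ i, 1 ≤ a i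
  · obtain ⟨i, hi⟩ := h
    calc min (∑' i, a i) 1 ≤ 1 := min_le_right _ _
      _ = min (a i) 1 := (min_eq_right hi).symm
      _ ≤ ∑' i, min (a i) 1 := ENNReal.le_tsum i
  · push Not at h
    simp_rw [min_eq_left (h _).le]
    exact min_le_left _ _

lemma ENNReal.biSup_mul_biSup_le {ι κ : Type*} {p : ι → Prop} {p' : κ → Prop}
    {f : ι → ℝ≥0∞} {g : κ → ℝ≥0∞} {c : ℝ≥0∞} (h : ∀ i, p i → ∀ j, p' j → f i * g j ≤ c) :
    (⨆ (i) (_ : p i), f i) * (⨆ (j) (_ : p' j), g j) ≤ c := by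
  simp only [ENNReal.iSup_mul, ENNReal.mul_iSup]
  exact iSup₂_le fun j hj => iSup₂_le fun i hi => h i hi j hj

lemma epow_ne_zero {b : ℝ≥0∞} (hb : b ≠ ∞) {q : ℝ} (hq : q ≤ 0) : epow b q ≠ 0 := by
  unfold epow
  split_ifs with h
  · exact ENNReal.top_ne_zero
  · exact (ENNReal.rpow_pos (pos_iff_ne_zero.2 fun hb0 => h ⟨hb0, hq⟩) hb).ne'

lemma epow_mul {a b : ℝ≥0∞} (ha : a ≠ ∞) (hb : b ≠ ∞) (q : ℝ) :
    epow (a * b) q = epow a q * epow b q := by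
  rcases lt_or_ge 0 q with hq | hq
  · simp only [epow, hq.not_ge, and_false, if_false]
    exact ENNReal.mul_rpow_of_nonneg a b hq.le
  rcases eq_or_ne a 0 with rfl | ha0
  · simp only [epow, zero_mul, true_and, if_pos hq]
    exact (ENNReal.top_mul (epow_ne_zero hb hq)).symm
  rcases eq_or_ne b 0 with rfl | hb0
  · simp only [epow, mul_zero, true_and, if_pos hq]
    exact (ENNReal.mul_top (epow_ne_zero ha hq)).symm
  simp only [epow, mul_ne_zero ha0 hb0, ha0, hb0, false_and, if_false]
  exact ENNReal.mul_rpow_of_ne_top ha hb q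

section ProductBalls

variable [MetricSpace X] [MetricSpace X']

lemma mem_closedBall_prod_iff {p : X × X'} {r : ℝ} {x : X} {y : X'} :
    (x, y) ∈ closedBall p r ↔ x ∈ closedBall p.1 r ∧ y ∈ closedBall p.2 r := by
  rw [← closedBall_prod_same, mem_prod]

lemma diam_closedBall_fst_le (p : X × X') (r : ℝ) :
    diam (closedBall p.1 r) ≤ diam (closedBall p r) := by
  rcases lt_or_ge r 0 with hr | hr
  · rw [closedBall_eq_empty.mpr hr, diam_empty]
    exact diam_nonneg
  calc diam (closedBall p.1 r) = diam (Prod.fst '' closedBall p r) := by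
        rw [← closedBall_prod_same, fst_image_prod _ (nonempty_closedBall.mpr hr)]
    _ ≤ diam (closedBall p r) := by
        simpa using (LipschitzWith.prod_fst (α := X) (β := X')).diam_image_le _ isBounded_closedBall

lemma diam_closedBall_snd_le (p : X × X') (r : ℝ) :
    diam (closedBall p.2 r) ≤ diam (closedBall p r) := by
  rcases lt_or_ge r 0 with hr | hr
  · rw [closedBall_eq_empty.mpr hr, diam_empty]
    exact diam_nonneg
  calc diam (closedBall p.2 r) = diam (Prod.snd '' closedBall p r) := by
        rw [← closedBall_prod_same, snd_image_prod (nonempty_closedBall.mpr hr)]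
    _ ≤ diam (closedBall p r) := by
        simpa using (LipschitzWith.prod_snd (α := X) (β := X')).diam_image_le _ isBounded_closedBall

lemma prodPre_closedBall (ξ : Set X → ℝ≥0∞) (ξ' : Set X' → ℝ≥0∞) (p : X × X') (r : ℝ) :
    prodPre ξ ξ' (closedBall p r) = ξ (closedBall p.1 r) * ξ' (closedBall p.2 r) := by
  rcases lt_or_ge r 0 with hr | hr
  · simp [prodPre, closedBall_eq_empty.mpr hr]
  · rw [prodPre, ← closedBall_prod_same, fst_image_prod _ (nonempty_closedBall.mpr hr),
      snd_image_prod (nonempty_closedBall.mpr hr)]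

variable [MeasurableSpace X] [MeasurableSpace X']

lemma ballWeight_prod_closedBall (μ : Measure X) [IsFiniteMeasure μ]
    (ν : Measure X') [IsFiniteMeasure ν] (q : ℝ) (ξ : Set X → ℝ≥0∞) (ξ' : Set X' → ℝ≥0∞)
    (p : X × X') (r : ℝ) :
    ballWeight (μ.prod ν) q (prodPre ξ ξ') (closedBall p r)
      = ballWeight μ q ξ (closedBall p.1 r) * ballWeight ν q ξ' (closedBall p.2 r) := by
  rw [ballWeight, prodPre_closedBall, ← closedBall_prod_same, Measure.prod_prod,
    epow_mul (measure_ne_top μ _) (measure_ne_top ν _), ballWeight, ballWeight]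
  ring

end ProductBalls

section WeightedCovers

variable [MetricSpace X] [MeasurableSpace X] {μ : Measure X} {q : ℝ} {ξ : Set X → ℝ≥0∞}
  {δ : ℝ} {E : Set X}

lemma Wd_le_tsum (hE : E.Nonempty) {w : ℕ → ℝ≥0} {c : ℕ → X} {r : ℕ → ℝ}
    (hcov : IsWeightedCover E δ w c r) :
    Wd μ q ξ δ E ≤ ∑' i, (w i : ℝ≥0∞) * ballWeight μ q ξ (closedBall (c i) (r i)) := by
  rw [Wd, if_neg hE.ne_empty]
  exact iInf_le_of_le w (iInf_le_of_le c (iInf_le_of_le r (iInf_le _ hcov)))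

lemma Wd_antitone {δ' : ℝ} (h : δ ≤ δ') : Wd μ q ξ δ' E ≤ Wd μ q ξ δ E := by
  rcases E.eq_empty_or_nonempty with rfl | hE
  · simp [Wd]
  conv_rhs => rw [Wd, if_neg hE.ne_empty]
  refine le_iInf fun w => le_iInf fun c => le_iInf fun r => le_iInf fun hcov => ?_
  exact Wd_le_tsum hE ⟨hcov.1, fun i => (hcov.2.1 i).trans (by linarith), hcov.2.2⟩

lemma mul_Wd_le_tsum {u : ℕ → ℝ≥0∞} {c : ℕ → X} {r : ℕ → ℝ} (hc : ∀ i, c i ∈ E)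
    (hdiam : ∀ i, diam (closedBall (c i) (r i)) ≤ 2 * δ) {t : ℝ≥0∞} (ht0 : t ≠ 0) (ht : t ≠ ∞)
    (hsum : ∀ x ∈ E, t ≤ ∑' i, if x ∈ closedBall (c i) (r i) then u i else 0) :
    t * Wd μ q ξ δ E ≤ ∑' i, u i * ballWeight μ q ξ (closedBall (c i) (r i)) := by
  rcases E.eq_empty_or_nonempty with rfl | hE
  · simp [Wd]
  set v : ℕ → ℝ≥0 := fun i => (min (u i / t) 1).toNNReal
  have hv : ∀ i, (v i : ℝ≥0∞) = min (u i / t) 1 := fun i =>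
    ENNReal.coe_toNNReal (ne_top_of_le_ne_top ENNReal.one_ne_top (min_le_right (u i / t) 1))
  have hvcov : IsWeightedCover E δ v c r := by
    refine ⟨hc, hdiam, fun x hx => ?_⟩
    calc 1 ≤ min ((∑' i, if x ∈ closedBall (c i) (r i) then u i else 0) / t) 1 :=
          le_min ((ENNReal.le_div_iff_mul_le (.inl ht0) (.inl ht)).2 (by simpa using hsum x hx))
            le_rfl
      _ = min (∑' i, if x ∈ closedBall (c i) (r i) then u i / t else 0) 1 := by
          simp only [div_eq_mul_inv, ← ENNReal.tsum_mul_right, ite_mul, zero_mul]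
      _ ≤ ∑' i, min (if x ∈ closedBall (c i) (r i) then u i / t else 0) 1 :=
          ENNReal.min_tsum_le_tsum_min_one _
      _ = ∑' i, if x ∈ closedBall (c i) (r i) then (v i : ℝ≥0∞) else 0 :=
          tsum_congr fun i => by split_ifs <;> simp [hv]
  calc t * Wd μ q ξ δ E
      ≤ t * ∑' i, (v i : ℝ≥0∞) * ballWeight μ q ξ (closedBall (c i) (r i)) := by
        gcongr
        exact Wd_le_tsum hE hvcov
    _ ≤ t * ∑' i, u i / t * ballWeight μ q ξ (closedBall (c i) (r i)) := by
        gcongr with i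
        exact (hv i).trans_le (min_le_left _ _)
    _ = ∑' i, u i * ballWeight μ q ξ (closedBall (c i) (r i)) := by
        rw [← ENNReal.tsum_mul_left]
        exact tsum_congr fun i => by rw [← mul_assoc, ENNReal.mul_div_cancel ht0 ht]

end WeightedCovers

section ProductCovers

variable [MetricSpace X] [MetricSpace X'] [MeasurableSpace X'] {q : ℝ} {δ : ℝ}

lemma Wd_le_tsum_slice (ν : Measure X') (ξ' : Set X' → ℝ≥0∞) {F : Set X} {F' : Set X'}
    {w : ℕ → ℝ≥0} {c : ℕ → X × X'} {r : ℕ → ℝ} (hcov : IsWeightedCover (F ×ˢ F') δ w c r)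
    {x : X} (hx : x ∈ F) :
    Wd ν q ξ' δ F' ≤ ∑' i, if x ∈ closedBall (c i).1 (r i) then
      (w i : ℝ≥0∞) * ballWeight ν q ξ' (closedBall (c i).2 (r i)) else 0 := by
  rcases F'.eq_empty_or_nonempty with rfl | hF'
  · simp [Wd]
  obtain ⟨hc, hdiam, hsum⟩ := hcov
  have hslice : IsWeightedCover F' δ (fun i => if x ∈ closedBall (c i).1 (r i) then w i else 0)
      (fun i => (c i).2) r := by
    refine ⟨fun i => (hc i).2, fun i => (diam_closedBall_snd_le _ _).trans (hdiam i),
      fun y hy => (hsum (x, y) ⟨hx, hy⟩).trans_eq (tsum_congr fun i => ?_)⟩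
    simp only [mem_closedBall_prod_iff]
    split_ifs <;> simp_all
  refine (Wd_le_tsum hF' hslice).trans_eq (tsum_congr fun i => ?_)
  split_ifs <;> simp

variable [MeasurableSpace X]

lemma Wd_mul_Wd_le_Wd_prod (μ : Measure X) [IsFiniteMeasure μ] (ν : Measure X') [IsFiniteMeasure ν]
    (ξ : Set X → ℝ≥0∞) (ξ' : Set X' → ℝ≥0∞) (F : Set X) (F' : Set X') :
    Wd μ q ξ δ F * Wd ν q ξ' δ F' ≤ Wd (μ.prod ν) q (prodPre ξ ξ') δ (F ×ˢ F') := by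
  rcases (F ×ˢ F').eq_empty_or_nonempty with hFF' | hFF'
  · rcases prod_eq_empty_iff.1 hFF' with rfl | rfl <;> simp [Wd]
  conv_rhs => rw [Wd, if_neg hFF'.ne_empty]
  refine le_iInf fun w => le_iInf fun c => le_iInf fun r => le_iInf fun hcov => ?_
  refine ENNReal.mul_le_of_forall_lt fun a ha t ht => ?_
  rcases eq_or_ne t 0 with rfl | ht0
  · simp
  calc a * t ≤ t * Wd μ q ξ δ F := by
        rw [mul_comm]
        gcongr
    _ ≤ ∑' i, (w i : ℝ≥0∞) * ballWeight ν q ξ' (closedBall (c i).2 (r i)) *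
          ballWeight μ q ξ (closedBall (c i).1 (r i)) :=
        mul_Wd_le_tsum (fun i => (hcov.1 i).1)
          (fun i => (diam_closedBall_fst_le _ _).trans (hcov.2.1 i)) ht0 ht.ne_top
          fun x hx => ht.le.trans (Wd_le_tsum_slice ν ξ' hcov hx)
    _ = ∑' i, (w i : ℝ≥0∞) * ballWeight (μ.prod ν) q (prodPre ξ ξ') (closedBall (c i) (r i)) :=
        tsum_congr fun i => by rw [ballWeight_prod_closedBall]; ring

lemma W0_mul_W0_le_W0_prod (μ : Measure X) [IsFiniteMeasure μ] (ν : Measure X')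
    [IsFiniteMeasure ν] (ξ : Set X → ℝ≥0∞) (ξ' : Set X' → ℝ≥0∞) (F : Set X) (F' : Set X') :
    W0 μ q ξ F * W0 ν q ξ' F' ≤ W0 (μ.prod ν) q (prodPre ξ ξ') (F ×ˢ F') :=
  ENNReal.biSup_mul_biSup_le fun δ hδ δ' hδ' =>
    calc Wd μ q ξ δ F * Wd ν q ξ' δ' F'
        ≤ Wd μ q ξ (min δ δ') F * Wd ν q ξ' (min δ δ') F' :=
          mul_le_mul' (Wd_antitone (min_le_left _ _)) (Wd_antitone (min_le_right _ _))
      _ ≤ Wd (μ.prod ν) q (prodPre ξ ξ') (min δ δ') (F ×ˢ F') := Wd_mul_Wd_le_Wd_prod μ ν ξ ξ' F F'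
      _ ≤ W0 (μ.prod ν) q (prodPre ξ ξ') (F ×ˢ F') :=
          le_iSup₂_of_le (min δ δ') (lt_min hδ hδ') le_rfl

end ProductCovers

section Thms

variable [MetricSpace X] [SeparableSpace X] [MeasurableSpace X] [BorelSpace X]
variable [MetricSpace X'] [SeparableSpace X'] [MeasurableSpace X'] [BorelSpace X']

theorem stmt14_general (q : ℝ) (μ : Measure X) [IsProbabilityMeasure μ]
    (ν : Measure X') [IsProbabilityMeasure ν]
    (ξ : Set X → ℝ≥0∞) (ξ' : Set X' → ℝ≥0∞)
    (E : Set X) (E' : Set X') :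
    WM μ q ξ E * WM ν q ξ' E' ≤ WM (μ.prod ν) q (prodPre ξ ξ') (E ×ˢ E') :=
  ENNReal.biSup_mul_biSup_le fun F hF F' hF' =>
    (W0_mul_W0_le_W0_prod μ ν ξ ξ' F F').trans (le_iSup₂_of_le (F ×ˢ F') (prod_mono hF hF') le_rfl)

theorem stmt14 (q : ℝ) (μ : Measure X) [IsProbabilityMeasure μ]
    (ν : Measure X') [IsProbabilityMeasure ν]
    (ξ : Set X → ℝ≥0∞) (ξ' : Set X' → ℝ≥0∞)
    (hξ : IsPremeasure ξ) (hξ' : IsPremeasure ξ')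
    (E : Set X) (E' : Set X') :
    WM μ q ξ E * WM ν q ξ' E' ≤ WM (μ.prod ν) q (prodPre ξ ξ') (E ×ˢ E') :=
  stmt14_general q μ ν ξ ξ' E E'

end Thms
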